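/- Let n ≥ 3 be an integer, K a real number, and let h₁, …, hₙ be real numbers with h₁ + ⋯ + hₙ = K. Then g₂(h₁,…,hₙ) ≤ ((3n−1)(n−2)/(2(3n+5)(n−1))) · K², where g₂(h₁,…,hₙ) = Σ_{1≤i<j≤n} hᵢhⱼ − (1/(n−1)) · h₁ · Σ_{j=2}^{n} hⱼ − Σ_{1≤j≤n, j≠2} hⱼ² + (1/(n−1)) · h₁². -/

import Mathlib

open Finset

/-- The quadratic form `g₂(h₁,…,hₙ) = Σ_{1≤i<j≤n} hᵢhⱼ − (1/(n−1))·h₁·Σ_{j=2}^{n} hⱼ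
− Σ_{1≤j≤n, j≠2} hⱼ² + (1/(n−1))·h₁²` (0-based: `h₁ = h 0`, `h₂ = h 1`,
`Σ_{j=2}^{n}` is the sum over indices `j` with `1 ≤ j`). -/
noncomputable def gTwo (n : ℕ) (hn : 3 ≤ n) (h : Fin n → ℝ) : ℝ :=
  (∑ i : Fin n, ∑ j : Fin n, if i < j then h i * h j else 0)
    - (1 / ((n : ℝ) - 1)) * h ⟨0, by omega⟩ * (∑ j : Fin n, if 1 ≤ (j : ℕ) then h j else 0)
    - (∑ j : Fin n, if (j : ℕ) ≠ 1 then h j ^ 2 else 0)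
    + (1 / ((n : ℝ) - 1)) * h ⟨0, by omega⟩ ^ 2

lemma split_sum (n : ℕ) (hn : 3 ≤ n) (f : Fin n → ℝ) :
    ∑ j, f j = f ⟨0, by omega⟩ + f ⟨1, by omega⟩
      + ∑ j ∈ univ.filter (fun j : Fin n => 2 ≤ (j : ℕ)), f j := by
  rw [Finset.sum_filter]
  have key : ∀ j : Fin n, f j =
      (if j = (⟨0, by omega⟩ : Fin n) then f j else 0)
      + (if j = (⟨1, by omega⟩ : Fin n) then f j else 0)
      + (if 2 ≤ (j : ℕ) then f j else 0) := by
    intro j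
    simp only [Fin.ext_iff]
    split_ifs <;> first | ring1 | (exfalso; omega)
  rw [Finset.sum_congr rfl (fun j _ => key j), Finset.sum_add_distrib,
    Finset.sum_add_distrib, Finset.sum_ite_eq' univ, Finset.sum_ite_eq' univ]
  simp

theorem stmt_10 (n : ℕ) (hn : 3 ≤ n) (K : ℝ) (h : Fin n → ℝ) (hsum : ∑ i, h i = K) :
    gTwo n hn h ≤ (3 * (n : ℝ) - 1) * ((n : ℝ) - 2) / (2 * (3 * (n : ℝ) + 5) * ((n : ℝ) - 1)) * K ^ 2 := by
  set s : Finset (Fin n) := univ.filter (fun j : Fin n => 2 ≤ (j : ℕ)) with hs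
  set a : ℝ := h ⟨0, by omega⟩ with ha
  set b : ℝ := h ⟨1, by omega⟩ with hb
  set T : ℝ := ∑ j ∈ s, h j with hT
  set Q2 : ℝ := ∑ j ∈ s, h j ^ 2 with hQ2
  have hN : (3 : ℝ) ≤ (n : ℝ) := by exact_mod_cast hn
  -- card of s
  have hcard : ((s.card : ℝ)) = (n : ℝ) - 2 := by
    have h2 : (univ.filter (fun j : Fin n => ¬ 2 ≤ (j : ℕ)))
        = {⟨0, by omega⟩, ⟨1, by omega⟩} := by
      ext j
      simp only [mem_filter, mem_univ, true_and, mem_insert, mem_singleton]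
      constructor
      · intro hj
        rcases (by omega : (j : ℕ) = 0 ∨ (j : ℕ) = 1) with h' | h' <;>
          [left; right] <;> exact Fin.ext h'
      · rintro (rfl | rfl) <;> simp
    have hadd : s.card + (univ.filter (fun j : Fin n => ¬ 2 ≤ (j : ℕ))).card = n := by
      rw [hs, Finset.card_filter_add_card_filter_not]; simp
    have hc2 : ({⟨0, by omega⟩, ⟨1, by omega⟩} : Finset (Fin n)).card = 2 := by
      rw [card_insert_of_notMem (by simp [Fin.ext_iff]), card_singleton]
    rw [h2, hc2] at hadd
    have : s.card = n - 2 := by omega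
    rw [this]
    push_cast [Nat.cast_sub (by omega : 2 ≤ n)]
    ring
  -- Cauchy-Schwarz
  have hCS : T ^ 2 ≤ ((n : ℝ) - 2) * Q2 := by
    rw [← hcard]
    exact_mod_cast sq_sum_le_card_mul_sum_sq (s := s) (f := h)
  have hQ2nn : 0 ≤ Q2 := Finset.sum_nonneg fun j _ => sq_nonneg _
  -- K = a + b + T
  have hK : a + b + T = K := by rw [← hsum, split_sum n hn h]
  -- sum over 1 ≤ j
  have hsum2 : (∑ j : Fin n, if 1 ≤ (j : ℕ) then h j else 0) = b + T := by
    have key : ∀ j : Fin n, (if 1 ≤ (j : ℕ) then h j else 0) =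
        (if j = (⟨1, by omega⟩ : Fin n) then h j else 0)
        + (if 2 ≤ (j : ℕ) then h j else 0) := by
      intro j
      simp only [Fin.ext_iff]
      split_ifs <;> first | ring1 | (exfalso; omega)
    rw [Finset.sum_congr rfl (fun j _ => key j), Finset.sum_add_distrib,
      Finset.sum_ite_eq' univ, hT, hs, Finset.sum_filter]
    simp
    rfl
  -- sum over j ≠ 1 of squares
  have hsum3 : (∑ j : Fin n, if (j : ℕ) ≠ 1 then h j ^ 2 else 0) = a ^ 2 + Q2 := by
    have key : ∀ j : Fin n, (if (j : ℕ) ≠ 1 then h j ^ 2 else 0) =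
        (if j = (⟨0, by omega⟩ : Fin n) then h j ^ 2 else 0)
        + (if 2 ≤ (j : ℕ) then h j ^ 2 else 0) := by
      intro j
      simp only [Fin.ext_iff]
      split_ifs <;> first | ring1 | (exfalso; omega)
    rw [Finset.sum_congr rfl (fun j _ => key j), Finset.sum_add_distrib,
      Finset.sum_ite_eq' univ, hQ2, hs, Finset.sum_filter]
    simp
    rfl
  -- squares sum
  have hQ : ∑ j : Fin n, h j ^ 2 = a ^ 2 + b ^ 2 + Q2 := by
    rw [split_sum n hn (fun j => h j ^ 2)]
  -- double sum
  have hP : (∑ i : Fin n, ∑ j : Fin n, if i < j then h i * h j else 0)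
      = (K ^ 2 - (a ^ 2 + b ^ 2 + Q2)) / 2 := by
    have tri : ∀ i j : Fin n, (if i < j then h i * h j else 0)
        + (if j < i then h i * h j else 0) + (if i = j then h i * h j else 0)
        = h i * h j := by
      intro i j
      rcases lt_trichotomy i j with h' | h' | h'
      · simp [h', h'.ne, not_lt.mpr h'.le]
      · simp [h', lt_irrefl]
      · simp [h', h'.ne', not_lt.mpr h'.le]
    have e1 : ∑ i : Fin n, ∑ j : Fin n, ((if i < j then h i * h j else 0)
        + (if j < i then h i * h j else 0) + (if i = j then h i * h j else 0)) = K ^ 2 := by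
      simp_rw [fun i j => tri i j, ← Finset.sum_mul_sum, hsum]
      ring
    have e2 : ∑ i : Fin n, ∑ j : Fin n, (if j < i then h i * h j else 0)
        = ∑ i : Fin n, ∑ j : Fin n, (if i < j then h i * h j else 0) := by
      rw [Finset.sum_comm]
      congr 1; funext i; congr 1; funext j
      by_cases h' : i < j <;> simp [h', mul_comm]
    have e3 : ∑ i : Fin n, ∑ j : Fin n, (if i = j then h i * h j else 0)
        = a ^ 2 + b ^ 2 + Q2 := by
      rw [← hQ]
      congr 1; funext i
      rw [Finset.sum_ite_eq univ i (fun j => h i * h j)]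
      simp [sq]
    simp_rw [Finset.sum_add_distrib] at e1
    rw [e2, e3] at e1
    linarith
  -- unfold and conclude
  rw [gTwo, hsum2, hsum3, hP]
  have h1 : (0:ℝ) < (n : ℝ) - 1 := by linarith
  have h2 : (0:ℝ) < (n : ℝ) - 2 := by linarith
  have h3 : (0:ℝ) < (n : ℝ) + 1 := by linarith
  have h4 : (0:ℝ) < 3 * (n : ℝ) + 5 := by linarith
  have key : (3 * (n : ℝ) - 1) * ((n : ℝ) - 2) / (2 * (3 * (n : ℝ) + 5) * ((n : ℝ) - 1)) * K ^ 2
      - ((K ^ 2 - (a ^ 2 + b ^ 2 + Q2)) / 2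
        - (1 / ((n : ℝ) - 1)) * a * (b + T) - (a ^ 2 + Q2) + (1 / ((n : ℝ) - 1)) * a ^ 2)
      = (3 / 2) * (Q2 - T ^ 2 / ((n : ℝ) - 2))
        + (((n : ℝ) + 1) / (2 * ((n : ℝ) - 2))) * (b - 3 * (K - a) / ((n : ℝ) + 1)) ^ 2
        + ((3 * (n : ℝ) + 5) * ((n : ℝ) - 2) / (2 * ((n : ℝ) - 1) * ((n : ℝ) + 1)))
          * (a - 2 * K / (3 * (n : ℝ) + 5)) ^ 2 := by
    have hKT : T = K - a - b := by linarith
    rw [hKT]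
    field_simp
    ring
  have t1 : 0 ≤ Q2 - T ^ 2 / ((n : ℝ) - 2) := by
    rw [sub_nonneg, div_le_iff₀ h2]
    linarith
  have t2 : 0 ≤ (((n : ℝ) + 1) / (2 * ((n : ℝ) - 2))) * (b - 3 * (K - a) / ((n : ℝ) + 1)) ^ 2 :=
    mul_nonneg (by positivity) (sq_nonneg _)
  have t3 : 0 ≤ ((3 * (n : ℝ) + 5) * ((n : ℝ) - 2) / (2 * ((n : ℝ) - 1) * ((n : ℝ) + 1)))
      * (a - 2 * K / (3 * (n : ℝ) + 5)) ^ 2 :=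
    mul_nonneg (by positivity) (sq_nonneg _)
  linarith
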